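/- arXiv:2501.12251 — 3 statements merged into one kernel-verified Lean document; each statement's English description precedes it below -/
import Mathlib

section
/- If θ = ⟨(μ_θ, ν_θ); r_θ⟩ is a D-IFV and ζ > 0 is a real number, then θ^{ζ_q} := ⟨(μ_θ^ζ, 1−(1−ν_θ)^ζ); √2·(r_θ/√2)^ζ⟩ is again a D-IFV; explicitly, μ_θ^ζ ∈ [0,1], 1−(1−ν_θ)^ζ ∈ [0,1], μ_θ^ζ + (1−(1−ν_θ)^ζ) ≤ 1, and √2·(r_θ/√2)^ζ ∈ [0,√2]. -/
open Set

lemma Real.rpow_mem_Icc_zero_one {x ζ : ℝ} (hx : x ∈ Icc (0:ℝ) 1) (hζ : 0 ≤ ζ) :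
    x ^ ζ ∈ Icc (0:ℝ) 1 :=
  ⟨Real.rpow_nonneg hx.1 ζ, Real.rpow_le_one hx.1 hx.2 hζ⟩

lemma mul_mem_Icc_zero_of_mem_Icc_zero_one {c t : ℝ} (hc : 0 ≤ c) (ht : t ∈ Icc (0:ℝ) 1) :
    c * t ∈ Icc 0 c :=
  ⟨mul_nonneg hc ht.1, mul_le_of_le_one_right hc ht.2⟩

/-- If θ is a D-IFV and ζ > 0, then θ^{ζ_q} is again a D-IFV.
Real powers `x ^ ζ` are `Real.rpow`. -/
theorem dIFV_pow_q (μθ νθ rθ ζ : ℝ)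
    (hμθ : μθ ∈ Set.Icc (0:ℝ) 1) (hνθ : νθ ∈ Set.Icc (0:ℝ) 1) (hθ : μθ + νθ ≤ 1)
    (hrθ : rθ ∈ Set.Icc (0:ℝ) (Real.sqrt 2)) (hζ : 0 < ζ) :
    μθ ^ ζ ∈ Set.Icc (0:ℝ) 1 ∧
    (1 - (1 - νθ) ^ ζ) ∈ Set.Icc (0:ℝ) 1 ∧
    μθ ^ ζ + (1 - (1 - νθ) ^ ζ) ≤ 1 ∧
    Real.sqrt 2 * (rθ / Real.sqrt 2) ^ ζ ∈ Set.Icc (0:ℝ) (Real.sqrt 2) := by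
  have h1ν : 1 - νθ ∈ Icc (0:ℝ) 1 := Icc.mem_iff_one_sub_mem.mp hνθ
  have hmono : μθ ^ ζ ≤ (1 - νθ) ^ ζ := Real.rpow_le_rpow hμθ.1 (by linarith) hζ.le
  have hr : rθ / Real.sqrt 2 ∈ Icc (0:ℝ) 1 :=
    unitInterval.div_mem hrθ.1 (Real.sqrt_nonneg 2) hrθ.2
  refine ⟨Real.rpow_mem_Icc_zero_one hμθ hζ.le, ?_, by linarith, ?_⟩
  · exact Icc.mem_iff_one_sub_mem.mp (Real.rpow_mem_Icc_zero_one h1ν hζ.le)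
  · exact mul_mem_Icc_zero_of_mem_Icc_zero_one (Real.sqrt_nonneg 2)
      (Real.rpow_mem_Icc_zero_one hr hζ.le)
end

section
/- Let θ_1, …, θ_m be D-IFVs and let ω_1, …, ω_m ∈ [0,1] with ∑_{k=1}^m ω_k = 1. Then the weighted geometric aggregation D-IFWGO_p(θ_1,…,θ_m) := ⟨(∏_{k=1}^m μ_{θ_k}^{ω_k}, 1 − ∏_{k=1}^m (1−ν_{θ_k})^{ω_k}); √2 − ∏_{k=1}^m (√2 − r_{θ_k})^{ω_k}⟩ is a D-IFV; explicitly, its first two components lie in [0,1], their sum is at most 1, and √2 − ∏_{k=1}^m (√2 − r_{θ_k})^{ω_k} ∈ [0,√2]. -/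
/-!
Each component is controlled by two facts about weighted geometric means with nonnegative
weights: they are monotone in the data, and when the weights sum to `1` they stay below any
common upper bound `c` of the data, since `∏ c ^ ω k = c ^ ∑ ω k = c`. The membership product
is then at most the non-membership product `∏ (1 - ν k) ^ ω k` because `μ k ≤ 1 - ν k`, which
gives the sum condition, and the radius product lies in `[0, √2]` because `√2 - r k` does.
-/

open Finset

namespace Real

variable {ι : Type*} {s : Finset ι} {w a b : ι → ℝ}

lemma prod_rpow_le_prod_rpow (hw : ∀ i ∈ s, 0 ≤ w i) (ha : ∀ i ∈ s, 0 ≤ a i)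
    (hab : ∀ i ∈ s, a i ≤ b i) : ∏ i ∈ s, a i ^ w i ≤ ∏ i ∈ s, b i ^ w i :=
  prod_le_prod (fun i hi => rpow_nonneg (ha i hi) _)
    fun i hi => rpow_le_rpow (ha i hi) (hab i hi) (hw i hi)

lemma prod_rpow_le_of_sum_eq_one {c : ℝ} (hc : 0 ≤ c) (hw : ∀ i ∈ s, 0 ≤ w i)
    (hw₁ : ∑ i ∈ s, w i = 1) (ha : ∀ i ∈ s, 0 ≤ a i) (hac : ∀ i ∈ s, a i ≤ c) :
    ∏ i ∈ s, a i ^ w i ≤ c :=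
  calc ∏ i ∈ s, a i ^ w i ≤ ∏ i ∈ s, c ^ w i := prod_rpow_le_prod_rpow hw ha hac
    _ = c := by rw [← rpow_sum_of_nonneg hc hw, hw₁, rpow_one]

end Real

/-- the weighted geometric aggregation D-IFWGO_p of D-IFVs is a D-IFV.
Real powers `x ^ ω` are `Real.rpow`. -/
theorem dIFWGO_p_isDIFV (m : ℕ) (μ ν r ω : Fin m → ℝ)
    (hμ : ∀ k, μ k ∈ Set.Icc (0:ℝ) 1) (hν : ∀ k, ν k ∈ Set.Icc (0:ℝ) 1)
    (hμν : ∀ k, μ k + ν k ≤ 1) (hr : ∀ k, r k ∈ Set.Icc (0:ℝ) (Real.sqrt 2))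
    (hω : ∀ k, ω k ∈ Set.Icc (0:ℝ) 1) (hωsum : ∑ k, ω k = 1) :
    (∏ k, (μ k) ^ (ω k)) ∈ Set.Icc (0:ℝ) 1 ∧
    (1 - ∏ k, (1 - ν k) ^ (ω k)) ∈ Set.Icc (0:ℝ) 1 ∧
    (∏ k, (μ k) ^ (ω k)) + (1 - ∏ k, (1 - ν k) ^ (ω k)) ≤ 1 ∧
    (Real.sqrt 2 - ∏ k, (Real.sqrt 2 - r k) ^ (ω k)) ∈ Set.Icc (0:ℝ) (Real.sqrt 2) := by
  have hω₀ : ∀ k ∈ univ, 0 ≤ ω k := fun k _ => (hω k).1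
  have hμ₀ : ∀ k ∈ univ, 0 ≤ μ k := fun k _ => (hμ k).1
  have hν₁ : ∀ k ∈ univ, 0 ≤ 1 - ν k := fun k _ => sub_nonneg.2 (hν k).2
  have hr₂ : ∀ k ∈ univ, 0 ≤ Real.sqrt 2 - r k := fun k _ => sub_nonneg.2 (hr k).2
  have hμ_le_ν : ∏ k, μ k ^ ω k ≤ ∏ k, (1 - ν k) ^ ω k :=
    Real.prod_rpow_le_prod_rpow hω₀ hμ₀ fun k _ => by linarith [hμν k]
  have hν_le : ∏ k, (1 - ν k) ^ ω k ≤ 1 :=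
    Real.prod_rpow_le_of_sum_eq_one zero_le_one hω₀ hωsum hν₁ fun k _ => by linarith [(hν k).1]
  have hr_le : ∏ k, (Real.sqrt 2 - r k) ^ ω k ≤ Real.sqrt 2 :=
    Real.prod_rpow_le_of_sum_eq_one (Real.sqrt_nonneg 2) hω₀ hωsum hr₂
      fun k _ => by linarith [(hr k).1]
  have hμ_nonneg : 0 ≤ ∏ k, μ k ^ ω k := prod_nonneg fun k hk => Real.rpow_nonneg (hμ₀ k hk) _
  have hr_nonneg : 0 ≤ ∏ k, (Real.sqrt 2 - r k) ^ ω k :=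
    prod_nonneg fun k hk => Real.rpow_nonneg (hr₂ k hk) _
  exact ⟨⟨hμ_nonneg, hμ_le_ν.trans hν_le⟩, ⟨by linarith, by linarith⟩, by linarith,
    ⟨by linarith, by linarith⟩⟩
end

section
/- Let τ be a fuzzy measure on X = {1,…,m}, let θ_1, …, θ_m be D-IFVs, let σ be a permutation of {1,…,m}, and set F_k := {σ(k),…,σ(m)} for k = 1,…,m, F_{m+1} := ∅, and w_k := τ(F_k) − τ(F_{k+1}). Then the disc intuitionistic fuzzy Choquet geometric integral D-IFCGIO_p^τ(θ_1,…,θ_m) := ⟨(∏_{k=1}^m μ_{θ_{σ(k)}}^{w_k}, 1 − ∏_{k=1}^m (1−ν_{θ_{σ(k)}})^{w_k}); √2 − ∏_{k=1}^m (√2 − r_{θ_{σ(k)}})^{w_k}⟩ is a D-IFV; explicitly, its first two components lie in [0,1], their sum is at most 1, and √2 − ∏_{k=1}^m (√2 − r_{θ_{σ(k)}})^{w_k} ∈ [0,√2]. -/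
/-!
The Choquet weights `w k = τ(F k) - τ(F (k+1))` of a monotone `τ` along the decreasing chain
`univ = F 0 ⊇ F 1 ⊇ ⋯ ⊇ F m = ∅` are nonnegative and telescope to `τ univ - τ ∅ = 1`.
Each component of the integral is then a weighted geometric mean: by AM–GM it stays below the
common bound `c` of its arguments (`c = 1` for membership and non-membership, `c = √2` for the
radius), and it is monotone in the arguments, which gives `μ + ν ≤ 1`.
-/

open Finset

/-- The paper's `F_{n+1}`: indices here are `0`-based. -/
def permSuffix {m : ℕ} (σ : Equiv.Perm (Fin m)) (n : ℕ) : Finset (Fin m) :=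
  (univ.filter (fun j : Fin m => n ≤ j.val)).image σ

section permSuffix

variable {m : ℕ} (σ : Equiv.Perm (Fin m))

theorem permSuffix_antitone : Antitone (permSuffix σ) := fun _ _ hab =>
  image_subset_image (monotone_filter_right _ fun _ _ h => hab.trans h)

theorem permSuffix_zero : permSuffix σ 0 = univ := by
  simp [permSuffix]

theorem permSuffix_self : permSuffix σ m = ∅ := by
  simp [permSuffix, Fin.is_lt]

end permSuffix

theorem Fin.sum_sub_succ {M : Type*} [AddCommGroup M] (g : ℕ → M) (m : ℕ) :
    ∑ k : Fin m, (g k - g (k + 1)) = g 0 - g m := by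
  rw [Fin.sum_univ_eq_sum_range (fun i => g i - g (i + 1)), sum_range_sub']

section WeightedGeomMean

variable {ι : Type*} {s : Finset ι} {w : ι → ℝ}

theorem Real.prod_rpow_mem_Icc {f : ι → ℝ} {c : ℝ} (hw : ∀ i ∈ s, 0 ≤ w i)
    (hw₁ : ∑ i ∈ s, w i = 1) (hf : ∀ i ∈ s, f i ∈ Set.Icc 0 c) :
    ∏ i ∈ s, f i ^ w i ∈ Set.Icc 0 c := by
  refine ⟨prod_nonneg fun i hi => rpow_nonneg (hf i hi).1 _, ?_⟩
  calc ∏ i ∈ s, f i ^ w i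
      ≤ ∑ i ∈ s, w i * f i := geom_mean_le_arith_mean_weighted s w f hw hw₁ fun i hi => (hf i hi).1
    _ ≤ ∑ i ∈ s, w i * c := sum_le_sum fun i hi => mul_le_mul_of_nonneg_left (hf i hi).2 (hw i hi)
    _ = c := by rw [← sum_mul, hw₁, one_mul]

theorem Real.prod_rpow_le_prod_rpow_s18 {f g : ι → ℝ} (hw : ∀ i ∈ s, 0 ≤ w i)
    (hf : ∀ i ∈ s, 0 ≤ f i) (hfg : ∀ i ∈ s, f i ≤ g i) :
    ∏ i ∈ s, f i ^ w i ≤ ∏ i ∈ s, g i ^ w i :=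
  prod_le_prod (fun i hi => rpow_nonneg (hf i hi) _)
    fun i hi => rpow_le_rpow (hf i hi) (hfg i hi) (hw i hi)

end WeightedGeomMean

theorem sub_mem_Icc_zero {x c : ℝ} (hx : x ∈ Set.Icc 0 c) : c - x ∈ Set.Icc 0 c :=
  ⟨sub_nonneg.2 hx.2, sub_le_self _ hx.1⟩

theorem dIFCGIO_p_isDIFV_general (m : ℕ) (τ : Finset (Fin m) → ℝ)
    (hempty : τ ∅ = 0) (huniv : τ Finset.univ = 1)
    (hmono : ∀ A B : Finset (Fin m), A ⊆ B → τ A ≤ τ B)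
    (μ ν r : Fin m → ℝ)
    (hμ : ∀ k, μ k ∈ Set.Icc (0:ℝ) 1) (hν : ∀ k, ν k ∈ Set.Icc (0:ℝ) 1)
    (hμν : ∀ k, μ k + ν k ≤ 1) (hr : ∀ k, r k ∈ Set.Icc (0:ℝ) (Real.sqrt 2))
    (σ : Equiv.Perm (Fin m)) (F : ℕ → Finset (Fin m))
    (hF : ∀ n, F n = (Finset.univ.filter (fun j : Fin m => n ≤ j.val)).image σ)
    (w : Fin m → ℝ) (hw : ∀ k : Fin m, w k = τ (F k.val) - τ (F (k.val + 1))) :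
    (∏ k, (μ (σ k)) ^ (w k)) ∈ Set.Icc (0:ℝ) 1 ∧
    (1 - ∏ k, (1 - ν (σ k)) ^ (w k)) ∈ Set.Icc (0:ℝ) 1 ∧
    (∏ k, (μ (σ k)) ^ (w k)) + (1 - ∏ k, (1 - ν (σ k)) ^ (w k)) ≤ 1 ∧
    (Real.sqrt 2 - ∏ k, (Real.sqrt 2 - r (σ k)) ^ (w k))
      ∈ Set.Icc (0:ℝ) (Real.sqrt 2) := by
  obtain rfl : F = permSuffix σ := funext hF
  have hw₀ : ∀ k ∈ univ, 0 ≤ w k := fun k _ => by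
    rw [hw k]
    exact sub_nonneg.2 (hmono _ _ (permSuffix_antitone σ k.val.le_succ))
  have hw₁ : ∑ k, w k = 1 := by
    simp only [hw, Fin.sum_sub_succ (fun n => τ (permSuffix σ n)), permSuffix_zero,
      permSuffix_self, huniv, hempty, sub_zero]
  have hν' : ∀ k, 1 - ν k ∈ Set.Icc (0:ℝ) 1 := fun k => sub_mem_Icc_zero (hν k)
  have hμν' : ∏ k, μ (σ k) ^ w k ≤ ∏ k, (1 - ν (σ k)) ^ w k :=
    Real.prod_rpow_le_prod_rpow_s18 hw₀ (fun k _ => (hμ _).1) fun k _ => le_sub_iff_add_le.2 (hμν _)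
  refine ⟨Real.prod_rpow_mem_Icc hw₀ hw₁ fun k _ => hμ _,
    sub_mem_Icc_zero (Real.prod_rpow_mem_Icc hw₀ hw₁ fun k _ => hν' _), by linarith,
    sub_mem_Icc_zero (Real.prod_rpow_mem_Icc hw₀ hw₁ fun k _ => sub_mem_Icc_zero (hr _))⟩

/-- the disc intuitionistic fuzzy Choquet geometric integral
D-IFCGIO_p^τ of D-IFVs θ_1,…,θ_m is a D-IFV.  Here X = Fin m (0-based), σ is a
permutation, F k = {σ(k), σ(k+1), …} (so F m = ∅), and the Choquet weights are
w k = τ(F k) − τ(F (k+1)).  Real powers `x ^ w` are `Real.rpow`. -/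
theorem dIFCGIO_p_isDIFV (m : ℕ) (τ : Finset (Fin m) → ℝ)
    (hrange : ∀ A, τ A ∈ Set.Icc (0:ℝ) 1)
    (hempty : τ ∅ = 0) (huniv : τ Finset.univ = 1)
    (hmono : ∀ A B : Finset (Fin m), A ⊆ B → τ A ≤ τ B)
    (μ ν r : Fin m → ℝ)
    (hμ : ∀ k, μ k ∈ Set.Icc (0:ℝ) 1) (hν : ∀ k, ν k ∈ Set.Icc (0:ℝ) 1)
    (hμν : ∀ k, μ k + ν k ≤ 1) (hr : ∀ k, r k ∈ Set.Icc (0:ℝ) (Real.sqrt 2))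
    (σ : Equiv.Perm (Fin m)) (F : ℕ → Finset (Fin m))
    (hF : ∀ n, F n = (Finset.univ.filter (fun j : Fin m => n ≤ j.val)).image σ)
    (w : Fin m → ℝ) (hw : ∀ k : Fin m, w k = τ (F k.val) - τ (F (k.val + 1))) :
    (∏ k, (μ (σ k)) ^ (w k)) ∈ Set.Icc (0:ℝ) 1 ∧
    (1 - ∏ k, (1 - ν (σ k)) ^ (w k)) ∈ Set.Icc (0:ℝ) 1 ∧
    (∏ k, (μ (σ k)) ^ (w k)) + (1 - ∏ k, (1 - ν (σ k)) ^ (w k)) ≤ 1 ∧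
    (Real.sqrt 2 - ∏ k, (Real.sqrt 2 - r (σ k)) ^ (w k))
      ∈ Set.Icc (0:ℝ) (Real.sqrt 2) :=
  dIFCGIO_p_isDIFV_general m τ hempty huniv hmono μ ν r hμ hν hμν hr σ F hF w hw
end
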